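/- arXiv:2602.05276 — 2 statements merged into one kernel-verified Lean document; each statement's English description precedes it below -/
import Mathlib

section
/- Let a > 0 and c > 0, set r = √(c/(2a)), and let C ⊆ ℝ² be the closure of the lens region D = {(x₁,x₂) : a x₁² < x₂ < −a x₁² + c}. Define the Reeb equivalence relation on C by: p ∼ q iff π(p) = π(q) and p and q lie in the same connected component of the fiber {z ∈ C : π(z) = π(p)}, where π(x₁,x₂) = x₁. Then the quotient topological space C/∼ is homeomorphic to the closed interval [−r, r] (hence to [0,1]); indeed the map induced by π is a homeomorphism from C/∼ onto [−r, r]. -/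
/-- The Reeb (Poincaré–Reeb) relation on a subset `C ⊆ ℝ²` with respect to the first
projection: two points of `C` are related iff they lie in the same connected component
of the same fiber of `π(x₁,x₂) = x₁` restricted to `C`. -/
def reebRel (C : Set (ℝ × ℝ)) (p q : C) : Prop :=
  (q : ℝ × ℝ) ∈ connectedComponentIn {z : ℝ × ℝ | z ∈ C ∧ z.1 = (p : ℝ × ℝ).1} (p : ℝ × ℝ)

/-- For `a > 0`, `c > 0`, `r = √(c/(2a))` and `C` the closure of the lens region
`D = {(x₁,x₂) : a x₁² < x₂ < −a x₁² + c}`, the quotient of `C` by the Reeb equivalence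
relation of the first projection `π`, with the quotient topology, is homeomorphic to the
closed interval `[−r, r]`, the homeomorphism being induced by `π`. -/
theorem lens_region_reeb_space_is_arc (a c r : ℝ) (ha : 0 < a) (hc : 0 < c)
    (hr : r = Real.sqrt (c / (2 * a)))
    (D C : Set (ℝ × ℝ))
    (hD : D = {x : ℝ × ℝ | a * x.1 ^ 2 < x.2 ∧ x.2 < -a * x.1 ^ 2 + c})
    (hC : C = closure D) :
    ∃ h : Quot (reebRel C) ≃ₜ (Set.Icc (-r) r),
      ∀ p : C, (h (Quot.mk (reebRel C) p) : ℝ) = (p : ℝ × ℝ).1 := by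
  have hr0 : 0 < r := hr ▸ Real.sqrt_pos.mpr (by positivity)
  have hr2 : r ^ 2 = c / (2 * a) := hr ▸ Real.sq_sqrt (by positivity)
  set E : Set (ℝ × ℝ) := {x | a * x.1 ^ 2 ≤ x.2 ∧ x.2 ≤ -a * x.1 ^ 2 + c} with hEdef
  have hEclosed : IsClosed E := by
    have : E = {x : ℝ × ℝ | a * x.1 ^ 2 ≤ x.2} ∩ {x : ℝ × ℝ | x.2 ≤ -a * x.1 ^ 2 + c} := by
      ext z; simp [hEdef, Set.mem_setOf_eq]
    rw [this]
    exact (isClosed_le (by fun_prop) continuous_snd).inter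
      (isClosed_le continuous_snd (by fun_prop))
  have hCE : C = E := by
    rw [hC]
    apply subset_antisymm
    · apply closure_minimal _ hEclosed
      rw [hD]; intro z hz; exact ⟨le_of_lt hz.1, le_of_lt hz.2⟩
    · intro x hx
      obtain ⟨h1, h2⟩ := hx
      have hx2 : 0 ≤ x.2 := le_trans (by positivity) h1
      set φ : ℝ → ℝ × ℝ := fun t => (t * x.1, t * x.2 + (1 - t) * (c / 2)) with hφ
      have hφ1 : φ 1 = x := by simp [hφ]
      have hcont : Continuous φ := by fun_prop
      haveI hne : (nhdsWithin (1 : ℝ) (Set.Ioo (0:ℝ) (1:ℝ))).NeBot := by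
        apply mem_closure_iff_nhdsWithin_neBot.mp
        rw [closure_Ioo (by norm_num : (0:ℝ) ≠ 1)]
        exact Set.right_mem_Icc.mpr (by norm_num)
      refine mem_closure_of_tendsto (b := nhdsWithin (1 : ℝ) (Set.Ioo (0:ℝ) (1:ℝ))) (f := φ)
        (hφ1 ▸ (hcont.tendsto 1).mono_left nhdsWithin_le_nhds) ?_
      filter_upwards [self_mem_nhdsWithin] with t ht
      obtain ⟨ht0, ht1⟩ := ht
      rw [hD]
      constructor
      · show a * (t * x.1) ^ 2 < t * x.2 + (1 - t) * (c / 2)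
        nlinarith [mul_nonneg (mul_nonneg ht0.le (sub_nonneg.mpr ht1.le)) hx2,
          mul_le_mul_of_nonneg_left h1 (mul_pos ht0 ht0).le]
      · show t * x.2 + (1 - t) * (c / 2) < -a * (t * x.1) ^ 2 + c
        nlinarith [mul_le_mul_of_nonneg_left h2 ht0.le,
          mul_nonneg (mul_nonneg ht0.le (sub_nonneg.mpr ht1.le)) (mul_nonneg ha.le (sq_nonneg x.1))]
  -- bounds on the first coordinate
  have hbound : ∀ z ∈ E, -r ≤ z.1 ∧ z.1 ≤ r := by
    intro z hz
    have hsq : z.1 ^ 2 ≤ r ^ 2 := by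
      rw [hr2, le_div_iff₀ (by positivity)]
      nlinarith [hz.1, hz.2]
    constructor <;> nlinarith [sq_nonneg (z.1 + r), sq_nonneg (z.1 - r)]
  -- fibers are preconnected
  have hfiber : ∀ x₀ : ℝ, {z : ℝ × ℝ | z ∈ C ∧ z.1 = x₀} =
      (fun y => (x₀, y)) '' Set.Icc (a * x₀ ^ 2) (-a * x₀ ^ 2 + c) := by
    intro x₀
    ext z
    constructor
    · rintro ⟨hzC, hz1⟩
      rw [hCE] at hzC
      refine ⟨z.2, ⟨?_, ?_⟩, ?_⟩
      · rw [← hz1]; exact hzC.1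
      · rw [← hz1]; exact hzC.2
      · rw [← hz1]
    · rintro ⟨y, hy, rfl⟩
      exact ⟨by rw [hCE]; exact ⟨hy.1, hy.2⟩, rfl⟩
  have hfiberconn : ∀ x₀ : ℝ, IsPreconnected {z : ℝ × ℝ | z ∈ C ∧ z.1 = x₀} := by
    intro x₀
    rw [hfiber x₀]
    exact isPreconnected_Icc.image _ (Continuous.continuousOn (by fun_prop))
  -- the relation is: same first coordinate
  have hrel : ∀ p q : C, reebRel C p q ↔ (q : ℝ × ℝ).1 = (p : ℝ × ℝ).1 := by
    intro p q
    constructor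
    · intro h
      exact (connectedComponentIn_subset _ _ h).2
    · intro h
      unfold reebRel
      rw [(hfiberconn (p : ℝ × ℝ).1).connectedComponentIn ⟨p.2, rfl⟩]
      exact ⟨q.2, h⟩
  -- the map
  have hmem : ∀ p : C, (p : ℝ × ℝ).1 ∈ Set.Icc (-r) r := by
    intro p
    have hp2 : (p : ℝ × ℝ) ∈ E := by rw [← hCE]; exact p.2
    have := hbound _ hp2
    exact ⟨this.1, this.2⟩
  set f : Quot (reebRel C) → Set.Icc (-r) r :=
    Quot.lift (fun p : C => (⟨(p : ℝ × ℝ).1, hmem p⟩ : Set.Icc (-r) r))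
      (fun p q hpq => Subtype.ext ((hrel p q).mp hpq).symm) with hfdef
  have hfcont : Continuous f :=
    continuous_quot_lift _ ((continuous_fst.comp continuous_subtype_val).subtype_mk _)
  have hfbij : Function.Bijective f := by
    constructor
    · intro u v
      induction u using Quot.ind with | _ p =>
      induction v using Quot.ind with | _ q =>
      intro huv
      have hv : ((⟨(p : ℝ × ℝ).1, hmem p⟩ : Set.Icc (-r) r) : ℝ)
          = ((⟨(q : ℝ × ℝ).1, hmem q⟩ : Set.Icc (-r) r) : ℝ) := congrArg Subtype.val huv
      exact Quot.sound ((hrel p q).mpr hv.symm)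
    · rintro ⟨t, ht⟩
      have ht2 : t ^ 2 ≤ c / (2 * a) := by rw [← hr2]; nlinarith [ht.1, ht.2]
      have hmemE : ((t, a * t ^ 2) : ℝ × ℝ) ∈ E := by
        refine ⟨le_refl _, ?_⟩
        show a * t ^ 2 ≤ -a * t ^ 2 + c
        rw [le_div_iff₀ (by positivity)] at ht2
        nlinarith
      exact ⟨Quot.mk _ ⟨(t, a * t ^ 2), hCE ▸ hmemE⟩, rfl⟩
  haveI : CompactSpace C := by
    rw [hCE]
    apply isCompact_iff_compactSpace.mp
    apply IsCompact.of_isClosed_subset (isCompact_Icc.prod (isCompact_Icc (a := (0:ℝ)) (b := c)))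
      hEclosed
    intro z hz
    refine ⟨hbound z hz, ?_, ?_⟩
    · exact le_trans (by positivity) hz.1
    · nlinarith [hz.2, mul_nonneg ha.le (sq_nonneg z.1)]
  refine ⟨Continuous.homeoOfEquivCompactToT2 (f := Equiv.ofBijective f hfbij) hfcont, ?_⟩
  intro p
  show ((Equiv.ofBijective f hfbij) (Quot.mk (reebRel C) p) : ℝ) = (p : ℝ × ℝ).1
  rw [Equiv.ofBijective_apply, hfdef]
end

section
/- Let m ≥ 2 be an integer and let f₁, f₂ : ℝ² → ℝ be continuously differentiable functions satisfying: (i) for every x with f₁(x) = 0 and f₂(x) ≥ 0, Df₁(x) ≠ 0; (ii) for every x with f₂(x) = 0 and f₁(x) ≥ 0, Df₂(x) ≠ 0; (iii) for every x with f₁(x) = 0 and f₂(x) = 0, the functionals Df₁(x) and Df₂(x) are linearly independent. Define e : ℝ² × ℝ × ℝ^{m−1} → ℝ² by e(x, y₁, y') = (f₁(x) − y₁², f₂(x) − ‖y'‖²). Then at every point p with e(p) = (0,0), the derivative De(p) : ℝ^{m+2} → ℝ² is surjective (has rank 2); hence (0,0) is a regular value of e and e⁻¹(0,0) is a smooth m-dimensional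 submanifold of ℝ^{m+2}. -/
/-!
At a zero `(x, y₁, y')` of `e` the derivative is
`(u, v, w) ↦ (Df₁(x) u - 2 y₁ v, Df₂(x) u - 2 ⟪y', w⟫)`, and `f₁ x = y₁ ^ 2`, `f₂ x = ‖y'‖ ^ 2`
are both nonnegative. A row whose `y`-part is nonzero can be matched by moving `y` alone. A row
whose `y`-part vanishes has `fᵢ x = 0`, so the hypotheses give `Dfᵢ(x) ≠ 0`, and when both
`y`-parts vanish, `Df₁(x)` and `Df₂(x)` are independent and `u` matches both rows at once.
-/

open Function

theorem LinearMap.surjective_pi_of_linearIndependent {ι K V : Type*} [Finite ι] [Field K]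
    [AddCommGroup V] [Module K V] {g : ι → V →ₗ[K] K} (hg : LinearIndependent K g) :
    Surjective (LinearMap.pi g) := by
  have hcoe : LinearIndependent K fun i => ⇑(g i) :=
    hg.map' (LinearMap.ltoFun K V K K) (LinearMap.ker_eq_bot.2 DFunLike.coe_injective)
  rw [← LinearMap.range_eq_top, eq_top_iff, ← span_flip_eq_top_iff_linearIndependent.2 hcoe,
    Submodule.span_le]
  rintro _ ⟨v, rfl⟩
  exact ⟨v, rfl⟩

theorem LinearMap.exists_apply_eq_apply_eq_of_linearIndependent {K V : Type*} [Field K]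
    [AddCommGroup V] [Module K V] {g₁ g₂ : V →ₗ[K] K} (hg : LinearIndependent K ![g₁, g₂])
    (s t : K) : ∃ v, g₁ v = s ∧ g₂ v = t := by
  obtain ⟨v, hv⟩ := LinearMap.surjective_pi_of_linearIndependent hg ![s, t]
  exact ⟨v, congr_fun hv 0, congr_fun hv 1⟩

theorem ContinuousLinearMap.linearIndependent_coe_pair {R M N : Type*} [CommRing R]
    [TopologicalSpace M] [AddCommGroup M] [Module R M] [TopologicalSpace N] [AddCommGroup N]
    [Module R N] [ContinuousConstSMul R N] [IsTopologicalAddGroup N] {f g : M →L[R] N}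
    (h : LinearIndependent R ![f, g]) :
    LinearIndependent R ![(f : M →ₗ[R] N), (g : M →ₗ[R] N)] := by
  have := h.map' (coeLM R) (LinearMap.ker_eq_bot.2 coe_injective)
  rwa [← FinVec.map_eq] at this

theorem surjective_sub_sub {K E V W : Type*} [Field K] [AddCommGroup E] [Module K E]
    [AddCommGroup V] [Module K V] [AddCommGroup W] [Module K W]
    {a₁ a₂ : E →ₗ[K] K} {b₁ : V →ₗ[K] K} {b₂ : W →ₗ[K] K}
    (h₁ : b₁ = 0 → a₁ ≠ 0) (h₂ : b₂ = 0 → a₂ ≠ 0)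
    (h₁₂ : b₁ = 0 → b₂ = 0 → LinearIndependent K ![a₁, a₂]) :
    Surjective fun q : E × V × W => (a₁ q.1 - b₁ q.2.1, a₂ q.1 - b₂ q.2.2) := by
  rintro ⟨s, t⟩
  rcases eq_or_ne b₁ 0 with hb₁ | hb₁ <;> rcases eq_or_ne b₂ 0 with hb₂ | hb₂
  · obtain ⟨u, hu₁, hu₂⟩ :=
      LinearMap.exists_apply_eq_apply_eq_of_linearIndependent (h₁₂ hb₁ hb₂) s t
    exact ⟨(u, 0, 0), by simp [hu₁, hu₂]⟩
  · obtain ⟨u, hu⟩ := LinearMap.surjective_of_ne_zero (h₁ hb₁) s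
    obtain ⟨w, hw⟩ := LinearMap.surjective_of_ne_zero hb₂ (a₂ u - t)
    exact ⟨(u, 0, w), by simp [hb₁, hu, hw]⟩
  · obtain ⟨u, hu⟩ := LinearMap.surjective_of_ne_zero (h₂ hb₂) t
    obtain ⟨v, hv⟩ := LinearMap.surjective_of_ne_zero hb₁ (a₁ u - s)
    exact ⟨(u, v, 0), by simp [hb₂, hu, hv]⟩
  · obtain ⟨v, hv⟩ := LinearMap.surjective_of_ne_zero hb₁ (-s)
    obtain ⟨w, hw⟩ := LinearMap.surjective_of_ne_zero hb₂ (-t)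
    exact ⟨(0, v, w), by simp [hv, hw]⟩

open ContinuousLinearMap in
theorem hasFDerivAt_sub_sq_sub_norm_sq {E F : Type*} [NormedAddCommGroup E] [NormedSpace ℝ E]
    [NormedAddCommGroup F] [InnerProductSpace ℝ F] {f₁ f₂ : E → ℝ} {f₁' f₂' : E →L[ℝ] ℝ}
    {x : E} (hf₁ : HasFDerivAt f₁ f₁' x) (hf₂ : HasFDerivAt f₂ f₂' x) (y₁ : ℝ) (y' : F) :
    HasFDerivAt (fun p : E × ℝ × F => (f₁ p.1 - p.2.1 ^ 2, f₂ p.1 - ‖p.2.2‖ ^ 2))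
      ((f₁'.comp (fst ℝ E (ℝ × F)) - (2 * y₁) • (fst ℝ ℝ F).comp (snd ℝ E (ℝ × F))).prod
        (f₂'.comp (fst ℝ E (ℝ × F)) -
          ((2 : ℝ) • innerSL ℝ y').comp ((snd ℝ ℝ F).comp (snd ℝ E (ℝ × F))))) (x, y₁, y') := by
  have hv : HasFDerivAt (fun p : E × ℝ × F => p.2.1) ((fst ℝ ℝ F).comp (snd ℝ E (ℝ × F)))
      (x, y₁, y') := hasFDerivAt_snd.fst
  have hy' := (hasFDerivAt_snd (p := ((x, y₁, y') : E × ℝ × F))).snd.norm_sq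
  refine (((hf₁.comp _ hasFDerivAt_fst).sub (hv.pow 2)).prodMk
    ((hf₂.comp _ hasFDerivAt_fst).sub hy')).congr_fderiv ?_
  ext q <;> simp [mul_comm]

theorem rank_two_at_zero_set_general (m : ℕ)
    (f₁ f₂ : ℝ × ℝ → ℝ) (hf₁ : ContDiff ℝ 1 f₁) (hf₂ : ContDiff ℝ 1 f₂)
    (h₁ : ∀ x, f₁ x = 0 → 0 ≤ f₂ x → fderiv ℝ f₁ x ≠ 0)
    (h₂ : ∀ x, f₂ x = 0 → 0 ≤ f₁ x → fderiv ℝ f₂ x ≠ 0)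
    (h₁₂ : ∀ x, f₁ x = 0 → f₂ x = 0 →
      LinearIndependent ℝ ![fderiv ℝ f₁ x, fderiv ℝ f₂ x])
    (e : (ℝ × ℝ) × ℝ × EuclideanSpace ℝ (Fin (m - 1)) → ℝ × ℝ)
    (he : e = fun p => (f₁ p.1 - p.2.1 ^ 2, f₂ p.1 - ‖p.2.2‖ ^ 2)) :
    ∀ p, e p = (0, 0) → Function.Surjective (fderiv ℝ e p) := by
  subst he
  rintro ⟨x, y₁, y'⟩ hp
  obtain ⟨hx₁, hx₂⟩ : f₁ x = y₁ ^ 2 ∧ f₂ x = ‖y'‖ ^ 2 := by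
    simpa only [Prod.mk.injEq, sub_eq_zero] using hp
  have hb₁ : ((2 * y₁) • LinearMap.id : ℝ →ₗ[ℝ] ℝ) = 0 → f₁ x = 0 := fun h => by
    simpa [hx₁] using LinearMap.congr_fun h 1
  have hb₂ : ((2 : ℝ) • innerₛₗ ℝ y' : EuclideanSpace ℝ (Fin (m - 1)) →ₗ[ℝ] ℝ) = 0 →
      f₂ x = 0 := fun h => by
    simpa [hx₂] using LinearMap.congr_fun h y'
  rw [(hasFDerivAt_sub_sq_sub_norm_sq (hf₁.differentiable one_ne_zero x).hasFDerivAt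
    (hf₂.differentiable one_ne_zero x).hasFDerivAt y₁ y').fderiv]
  refine surjective_sub_sub (a₁ := (fderiv ℝ f₁ x : ℝ × ℝ →ₗ[ℝ] ℝ))
    (a₂ := (fderiv ℝ f₂ x : ℝ × ℝ →ₗ[ℝ] ℝ)) (b₁ := (2 * y₁) • LinearMap.id)
    (b₂ := (2 : ℝ) • innerₛₗ ℝ y') (fun h => ?_) (fun h => ?_) (fun h h' => ?_)
  · exact mod_cast h₁ x (hb₁ h) (hx₂ ▸ by positivity)
  · exact mod_cast h₂ x (hb₂ h) (hx₁ ▸ by positivity)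
  · exact ContinuousLinearMap.linearIndependent_coe_pair (h₁₂ x (hb₁ h) (hb₂ h'))

/-- Let `f₁, f₂ : ℝ² → ℝ` be `C¹` with: `Df₁ ≠ 0` on `{f₁ = 0, f₂ ≥ 0}`, `Df₂ ≠ 0` on
`{f₂ = 0, f₁ ≥ 0}`, and `Df₁, Df₂` linearly independent on `{f₁ = 0, f₂ = 0}`. Then the
map `e(x, y₁, y') = (f₁(x) − y₁², f₂(x) − ‖y'‖²)` on `ℝ² × ℝ × ℝ^{m−1}` has surjective
derivative (rank 2) at every point of `e⁻¹(0,0)`; hence `(0,0)` is a regular value of `e`. -/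
theorem rank_two_at_zero_set (m : ℕ) (hm : 2 ≤ m)
    (f₁ f₂ : ℝ × ℝ → ℝ) (hf₁ : ContDiff ℝ 1 f₁) (hf₂ : ContDiff ℝ 1 f₂)
    (h₁ : ∀ x, f₁ x = 0 → 0 ≤ f₂ x → fderiv ℝ f₁ x ≠ 0)
    (h₂ : ∀ x, f₂ x = 0 → 0 ≤ f₁ x → fderiv ℝ f₂ x ≠ 0)
    (h₁₂ : ∀ x, f₁ x = 0 → f₂ x = 0 →
      LinearIndependent ℝ ![fderiv ℝ f₁ x, fderiv ℝ f₂ x])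
    (e : (ℝ × ℝ) × ℝ × EuclideanSpace ℝ (Fin (m - 1)) → ℝ × ℝ)
    (he : e = fun p => (f₁ p.1 - p.2.1 ^ 2, f₂ p.1 - ‖p.2.2‖ ^ 2)) :
    ∀ p, e p = (0, 0) → Function.Surjective (fderiv ℝ e p) :=
  rank_two_at_zero_set_general m f₁ f₂ hf₁ hf₂ h₁ h₂ h₁₂ e he
end
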